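/- Let c : [0,1] → ℝⁿ be a C¹ curve with |c'(s) − c'(0)| ≤ ε for all s, and suppose C ≤ |c'(s)| ≤ D for all s ∈ [0,1], with C² > ε²/2. Then the cosine of the angle between c(1) − c(0) and c'(0) is at least (C² − ε²/2)/D², i.e. ⟨c(1) − c(0), c'(0)⟩ ≥ ((C² − ε²/2)/D²)·|c(1) − c(0)|·|c'(0)|. -/

import Mathlib

theorem stmt_3 {E : Type*} [NormedAddCommGroup E] [InnerProductSpace ℝ E]
    (c : ℝ → E) (c' : ℝ → E) (ε C D : ℝ)
    (hε : 0 < ε) (hC : 0 < C) (hD : 0 < D)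
    (hderiv : ∀ s ∈ Set.Icc (0 : ℝ) 1, HasDerivAt c (c' s) s)
    (hcont : ContinuousOn c' (Set.Icc (0 : ℝ) 1))
    (hclose : ∀ s ∈ Set.Icc (0 : ℝ) 1, ‖c' s - c' 0‖ ≤ ε)
    (hlow : ∀ s ∈ Set.Icc (0 : ℝ) 1, C ≤ ‖c' s‖)
    (hup : ∀ s ∈ Set.Icc (0 : ℝ) 1, ‖c' s‖ ≤ D)
    (hCε : ε ^ 2 / 2 < C ^ 2) :
    (inner ℝ (c 1 - c 0) (c' 0) : ℝ) ≥
      ((C ^ 2 - ε ^ 2 / 2) / D ^ 2) * ‖c 1 - c 0‖ * ‖c' 0‖ := by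
  have h01 : (0:ℝ) ∈ Set.Icc (0:ℝ) 1 := by norm_num
  have h11 : (1:ℝ) ∈ Set.Icc (0:ℝ) 1 := by norm_num
  have huIcc : Set.uIcc (0:ℝ) 1 = Set.Icc (0:ℝ) 1 := Set.uIcc_of_le (by norm_num)
  -- derivative of s ↦ ⟨c s, c' 0⟩
  have hderivf : ∀ s ∈ Set.Icc (0:ℝ) 1,
      HasDerivAt (fun t => (inner ℝ (c t) (c' 0) : ℝ)) (inner ℝ (c' s) (c' 0)) s := by
    intro s hs
    have h := (hderiv s hs).inner ℝ (hasDerivAt_const s (c' 0))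
    simpa using h
  have hIntInner : IntervalIntegrable (fun s => (inner ℝ (c' s) (c' 0) : ℝ))
      MeasureTheory.volume 0 1 := by
    apply ContinuousOn.intervalIntegrable
    rw [huIcc]
    exact hcont.inner continuousOn_const
  have hinner : (inner ℝ (c 1 - c 0) (c' 0) : ℝ)
      = ∫ s in (0:ℝ)..1, (inner ℝ (c' s) (c' 0) : ℝ) := by
    rw [inner_sub_left]
    symm
    exact intervalIntegral.integral_eq_sub_of_hasDerivAt
      (f := fun t => (inner ℝ (c t) (c' 0) : ℝ))
      (fun s hs => hderivf s (by rwa [huIcc] at hs)) hIntInner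
  have hpt : ∀ s ∈ Set.Icc (0:ℝ) 1, C^2 - ε^2/2 ≤ (inner ℝ (c' s) (c' 0) : ℝ) := by
    intro s hs
    have h1 := hlow s hs
    have h0 := hlow 0 h01
    have h2 := hclose s hs
    have key : ‖c' s - c' 0‖^2 = ‖c' s‖^2 - 2 * inner ℝ (c' s) (c' 0) + ‖c' 0‖^2 :=
      norm_sub_sq_real _ _
    have hsq : ‖c' s - c' 0‖^2 ≤ ε^2 := by
      nlinarith [norm_nonneg (c' s - c' 0)]
    nlinarith [sq_nonneg (‖c' s‖ - C), sq_nonneg (‖c' 0‖ - C)]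
  have hint2 : C^2 - ε^2/2 ≤ ∫ s in (0:ℝ)..1, (inner ℝ (c' s) (c' 0) : ℝ) := by
    have hmono := intervalIntegral.integral_mono_on (by norm_num : (0:ℝ) ≤ 1)
      intervalIntegrable_const hIntInner hpt
    simpa using hmono
  -- mean value inequality for the norm bound
  have hnorm : ‖c 1 - c 0‖ ≤ D := by
    have hmvt := Convex.norm_image_sub_le_of_norm_hasDerivWithin_le
      (f := c) (f' := c') (C := D) (s := Set.Icc (0:ℝ) 1)
      (fun x hx => (hderiv x hx).hasDerivWithinAt) hup (convex_Icc 0 1) h01 h11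
    simpa using hmvt
  have hn0 : ‖c' 0‖ ≤ D := hup 0 h01
  have hA : 0 < C^2 - ε^2/2 := by linarith
  have hfin : ((C ^ 2 - ε ^ 2 / 2) / D ^ 2) * ‖c 1 - c 0‖ * ‖c' 0‖ ≤ C^2 - ε^2/2 := by
    have h1 : ((C ^ 2 - ε ^ 2 / 2) / D ^ 2) * ‖c 1 - c 0‖ * ‖c' 0‖
        ≤ ((C ^ 2 - ε ^ 2 / 2) / D ^ 2) * D * D := by
      gcongr
    have h2 : ((C ^ 2 - ε ^ 2 / 2) / D ^ 2) * D * D = C^2 - ε^2/2 := by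
      field_simp
    linarith
  rw [ge_iff_le, hinner]
  linarith
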